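/- arXiv:2507.01655 — 10 statements merged into one kernel-verified Lean document; each statement's English description precedes it below -/
import Mathlib

section
/- Let A be an alternating 4-form on ℝ⁶. Suppose that for every index p ∈ {1,…,6} the 3-form e_p⌟A lies in the module Λ³₁₂, i.e. (i) Σ_{j,k,l} A(e_p,e_j,e_k,e_l)·Φ(e_j,e_k,e_l,e_i) = 0 for every i ∈ {1,…,6}, (ii) Σ_{j,k,l} A(e_p,e_j,e_k,e_l)·Ψ⁺(e_j,e_k,e_l) = 0, and (iii) Σ_{j,k,l} A(e_p,e_j,e_k,e_l)·Ψ⁻(e_j,e_k,e_l) = 0, where all sums run over 1,…,6. Then A = 0. -/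
open scoped BigOperators

noncomputable section

/-- The standard inner product on ℝ⁶. -/
def gIP (X Y : Fin 6 → ℝ) : ℝ := ∑ i, X i * Y i

/-- The standard orthonormal basis e₁,…,e₆ (0-indexed). -/
def e (i : Fin 6) : Fin 6 → ℝ := fun j => if j = i then 1 else 0

/-- The 2-form e_{ij} (0-indexed). -/
def two (i j : Fin 6) (X Y : Fin 6 → ℝ) : ℝ := X i * Y j - X j * Y i

/-- The 3-form e_{ijk} (0-indexed). -/
def three (i j k : Fin 6) (X Y Z : Fin 6 → ℝ) : ℝ :=
  X i * (Y j * Z k - Y k * Z j) - X j * (Y i * Z k - Y k * Z i) + X k * (Y i * Z j - Y j * Z i)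

/-- The 4-form e_{ijkl} (0-indexed). -/
def four (i j k l : Fin 6) (X Y Z W : Fin 6 → ℝ) : ℝ :=
  X i * three j k l Y Z W - X j * three i k l Y Z W
    + X k * three i j l Y Z W - X l * three i j k Y Z W

/-- F = −e₁₂ − e₃₄ − e₅₆. -/
def Fform (X Y : Fin 6 → ℝ) : ℝ := -two 0 1 X Y - two 2 3 X Y - two 4 5 X Y

/-- Ψ⁺ = −e₁₃₅ + e₂₃₆ + e₁₄₆ + e₂₄₅. -/
def Psip (X Y Z : Fin 6 → ℝ) : ℝ :=
  -three 0 2 4 X Y Z + three 1 2 5 X Y Z + three 0 3 5 X Y Z + three 1 3 4 X Y Z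

/-- Ψ⁻ = −e₁₃₆ − e₁₄₅ − e₂₃₅ + e₂₄₆. -/
def Psim (X Y Z : Fin 6 → ℝ) : ℝ :=
  -three 0 2 5 X Y Z - three 0 3 4 X Y Z - three 1 2 4 X Y Z + three 1 3 5 X Y Z

/-- Φ(X,Y,Z,V) = F(X,Y)F(Z,V) + F(Y,Z)F(X,V) + F(Z,X)F(Y,V). -/
def Phi (X Y Z V : Fin 6 → ℝ) : ℝ :=
  Fform X Y * Fform Z V + Fform Y Z * Fform X V + Fform Z X * Fform Y V

/-- The orthogonal complex structure: Je₁=e₂, Je₂=−e₁, Je₃=e₄, Je₄=−e₃, Je₅=e₆, Je₆=−e₅. -/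
def Jc (X : Fin 6 → ℝ) : Fin 6 → ℝ := ![-X 1, X 0, -X 3, X 2, -X 5, X 4]

/-- Θ⁺ = e₁₃₅ − e₁₄₆ − e₂₃₆ − e₂₄₅. -/
def Thp (X Y Z : Fin 6 → ℝ) : ℝ :=
  three 0 2 4 X Y Z - three 0 3 5 X Y Z - three 1 2 5 X Y Z - three 1 3 4 X Y Z

/-- Θ⁻ = e₁₃₆ + e₁₄₅ + e₂₃₅ − e₂₄₆. -/
def Thm (X Y Z : Fin 6 → ℝ) : ℝ :=
  three 0 2 5 X Y Z + three 0 3 4 X Y Z + three 1 2 4 X Y Z - three 1 3 5 X Y Z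

/-- Nijenhuis tensor N(X,Y) = [JX,JY] − [X,Y] − J[JX,Y] − J[X,JY] for a bracket `br`. -/
def Nij (br : (Fin 6 → ℝ) → (Fin 6 → ℝ) → (Fin 6 → ℝ)) (X Y : Fin 6 → ℝ) : Fin 6 → ℝ :=
  br (Jc X) (Jc Y) - br X Y - Jc (br (Jc X) Y) - Jc (br X (Jc Y))

/-- Chevalley–Eilenberg differential of a 2-form. -/
def d2 (br : (Fin 6 → ℝ) → (Fin 6 → ℝ) → (Fin 6 → ℝ))
    (α : (Fin 6 → ℝ) → (Fin 6 → ℝ) → ℝ) (X Y Z : Fin 6 → ℝ) : ℝ :=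
  -α (br X Y) Z + α (br X Z) Y - α (br Y Z) X

/-- Chevalley–Eilenberg differential of a 3-form. -/
def d3 (br : (Fin 6 → ℝ) → (Fin 6 → ℝ) → (Fin 6 → ℝ))
    (α : (Fin 6 → ℝ) → (Fin 6 → ℝ) → (Fin 6 → ℝ) → ℝ) (X Y Z W : Fin 6 → ℝ) : ℝ :=
  -α (br X Y) Z W + α (br X Z) Y W - α (br X W) Y Z
    - α (br Y Z) X W + α (br Y W) X Z - α (br Z W) X Y

/-- The torsion connection ∇ associated with a bracket `br` and a 3-form `T`:
g(∇_X Y, Z) = ½( g([X,Y],Z) − g([Y,Z],X) + g([Z,X],Y) + T(X,Y,Z) ). -/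
def nab (br : (Fin 6 → ℝ) → (Fin 6 → ℝ) → (Fin 6 → ℝ))
    (T : (Fin 6 → ℝ) → (Fin 6 → ℝ) → (Fin 6 → ℝ) → ℝ)
    (X Y : Fin 6 → ℝ) : Fin 6 → ℝ :=
  fun m => (1/2) * (gIP (br X Y) (e m) - gIP (br Y (e m)) X + gIP (br (e m) X) Y + T X Y (e m))

/-- The covariant derivative of a 3-form α:
(∇_X α)(Y,Z,V) = −α(∇_X Y,Z,V) − α(Y,∇_X Z,V) − α(Y,Z,∇_X V). -/
def nabForm3 (br : (Fin 6 → ℝ) → (Fin 6 → ℝ) → (Fin 6 → ℝ))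
    (T α : (Fin 6 → ℝ) → (Fin 6 → ℝ) → (Fin 6 → ℝ) → ℝ)
    (X Y Z V : Fin 6 → ℝ) : ℝ :=
  -α (nab br T X Y) Z V - α Y (nab br T X Z) V - α Y Z (nab br T X V)

/-- Curvature R(X,Y)Z = ∇_X∇_Y Z − ∇_Y∇_X Z − ∇_{[X,Y]}Z. -/
def Rmap (br : (Fin 6 → ℝ) → (Fin 6 → ℝ) → (Fin 6 → ℝ))
    (T : (Fin 6 → ℝ) → (Fin 6 → ℝ) → (Fin 6 → ℝ) → ℝ)
    (X Y Z : Fin 6 → ℝ) : Fin 6 → ℝ :=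
  nab br T X (nab br T Y Z) - nab br T Y (nab br T X Z) - nab br T (br X Y) Z

/-- R(X,Y,Z,V) = g(R(X,Y)Z,V). -/
def R4 (br : (Fin 6 → ℝ) → (Fin 6 → ℝ) → (Fin 6 → ℝ))
    (T : (Fin 6 → ℝ) → (Fin 6 → ℝ) → (Fin 6 → ℝ) → ℝ)
    (X Y Z V : Fin 6 → ℝ) : ℝ :=
  gIP (Rmap br T X Y Z) V

/-!
Since Φ = e₁₂₃₄ + e₁₂₅₆ + e₃₄₅₆, contracting e_p⌟A against Φ(·,·,·,e_i) gives, up to signs,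
the sum of the two components A(e_p, e_{i'}, e_q, e_{q'}) where i' is the partner of i in the
pairs {1,2}, {3,4}, {5,6} and {q, q'} runs over the two other pairs. Taking p in one of these
pairs kills one term, so every component whose indices contain exactly one full pair vanishes.
The three remaining components x = A₁₂₃₄, y = A₁₂₅₆, z = A₃₄₅₆ satisfy x + y = x + z = y + z = 0
(take p = i).
-/

namespace AlternatingMap

variable {R M N : Type*} [Semiring R] [AddCommMonoid M] [Module R M] [AddCommGroup N] [Module R N]

theorem map_vec4_swap01 (f : M [⋀^Fin 4]→ₗ[R] N) (a b c d : M) :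
    f ![a, b, c, d] = -f ![b, a, c, d] := by
  rw [← f.map_swap _ (show (0 : Fin 4) ≠ 1 by decide)]
  congr 1; funext m; fin_cases m <;> rfl

theorem map_vec4_swap12 (f : M [⋀^Fin 4]→ₗ[R] N) (a b c d : M) :
    f ![a, b, c, d] = -f ![a, c, b, d] := by
  rw [← f.map_swap _ (show (1 : Fin 4) ≠ 2 by decide)]
  congr 1; funext m; fin_cases m <;> rfl

theorem map_vec4_swap23 (f : M [⋀^Fin 4]→ₗ[R] N) (a b c d : M) :
    f ![a, b, c, d] = -f ![a, b, d, c] := by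
  rw [← f.map_swap _ (show (2 : Fin 4) ≠ 3 by decide)]
  congr 1; funext m; fin_cases m <;> rfl

theorem map_vec4_cycle (f : M [⋀^Fin 4]→ₗ[R] N) (a b c d : M) :
    f ![a, b, c, d] = f ![b, c, a, d] := by
  rw [map_vec4_swap01, map_vec4_swap12, neg_neg]

@[simp] theorem map_vec4_eq_zero_of_eq01 (f : M [⋀^Fin 4]→ₗ[R] N) (a c d : M) :
    f ![a, a, c, d] = 0 :=
  f.map_eq_zero_of_eq _ (i := 0) (j := 1) rfl (by decide)

@[simp] theorem map_vec4_eq_zero_of_eq02 (f : M [⋀^Fin 4]→ₗ[R] N) (a b d : M) :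
    f ![a, b, a, d] = 0 :=
  f.map_eq_zero_of_eq _ (i := 0) (j := 2) rfl (by decide)

@[simp] theorem map_vec4_eq_zero_of_eq03 (f : M [⋀^Fin 4]→ₗ[R] N) (a b c : M) :
    f ![a, b, c, a] = 0 :=
  f.map_eq_zero_of_eq _ (i := 0) (j := 3) rfl (by decide)

theorem eq_zero_of_forall_strictMono {R : Type*} [CommSemiring R] [Module R M] [Module R N]
    {ι : Type*} [LinearOrder ι] {n : ℕ} (b : Module.Basis ι R M)
    (f : M [⋀^Fin n]→ₗ[R] N) (h : ∀ v : Fin n → ι, StrictMono v → f (b ∘ v) = 0) : f = 0 := by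
  refine b.ext_alternating fun v hv => ?_
  set σ := Tuple.sort v
  have hsort : StrictMono (v ∘ σ) :=
    (Tuple.monotone_sort v).strictMono_of_injective (hv.comp σ.injective)
  have : (fun i => b (v i)) = (b ∘ v ∘ σ) ∘ ⇑σ⁻¹ := by funext i; simp
  rw [this, f.map_perm, h _ hsort, smul_zero, zero_apply]

end AlternatingMap

open AlternatingMap

section Contraction

variable (A : (Fin 6 → ℝ) [⋀^Fin 4]→ₗ[ℝ] ℝ) (v : Fin 6 → ℝ)

theorem sum_mul_three (a b c : Fin 6) :
    ∑ j, ∑ k, ∑ l, A ![v, e j, e k, e l] * three a b c (e j) (e k) (e l) =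
      6 * A ![v, e a, e b, e c] := by
  simp only [three, e, mul_sub, mul_add, Finset.sum_sub_distrib, Finset.sum_add_distrib,
    mul_ite, mul_one, mul_zero, Finset.sum_ite_eq, Finset.mem_univ, if_true]
  linear_combination (-2) * map_vec4_swap23 A v (e a) (e c) (e b)
    - 3 * map_vec4_swap12 A v (e b) (e a) (e c) + 2 * map_vec4_swap23 A v (e b) (e c) (e a)
    + map_vec4_swap12 A v (e c) (e a) (e b) - map_vec4_swap12 A v (e c) (e b) (e a)

theorem four_eq_expand_last (a b c d : Fin 6) (X Y Z W : Fin 6 → ℝ) :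
    four a b c d X Y Z W = W d * three a b c X Y Z - W c * three a b d X Y Z
      + W b * three a c d X Y Z - W a * three b c d X Y Z := by
  simp only [four, three]; ring

theorem sum_mul_four (a b c d : Fin 6) (W : Fin 6 → ℝ) :
    ∑ j, ∑ k, ∑ l, A ![v, e j, e k, e l] * four a b c d (e j) (e k) (e l) W =
      6 * (W d * A ![v, e a, e b, e c] - W c * A ![v, e a, e b, e d]
        + W b * A ![v, e a, e c, e d] - W a * A ![v, e b, e c, e d]) := by
  simp only [four_eq_expand_last, mul_sub, mul_add, Finset.sum_sub_distrib, Finset.sum_add_distrib,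
    mul_left_comm _ (W _), ← Finset.mul_sum, sum_mul_three]

theorem Phi_eq_four (X Y Z W : Fin 6 → ℝ) :
    Phi X Y Z W = four 0 1 2 3 X Y Z W + four 0 1 4 5 X Y Z W + four 2 3 4 5 X Y Z W := by
  simp only [Phi, Fform, two, four, three]; ring

theorem sum_mul_Phi (W : Fin 6 → ℝ) :
    ∑ j, ∑ k, ∑ l, A ![v, e j, e k, e l] * Phi (e j) (e k) (e l) W =
      6 * (W 3 * A ![v, e 0, e 1, e 2] - W 2 * A ![v, e 0, e 1, e 3]
        + W 1 * A ![v, e 0, e 2, e 3] - W 0 * A ![v, e 1, e 2, e 3]) +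
      6 * (W 5 * A ![v, e 0, e 1, e 4] - W 4 * A ![v, e 0, e 1, e 5]
        + W 1 * A ![v, e 0, e 4, e 5] - W 0 * A ![v, e 1, e 4, e 5]) +
      6 * (W 5 * A ![v, e 2, e 3, e 4] - W 4 * A ![v, e 2, e 3, e 5]
        + W 3 * A ![v, e 2, e 4, e 5] - W 2 * A ![v, e 3, e 4, e 5]) := by
  simp only [Phi_eq_four, mul_add, Finset.sum_add_distrib, sum_mul_four]

theorem map_increasing_eq_zero_of_contract_Phi (hA : ∀ p i : Fin 6,
      ∑ j, ∑ k, ∑ l, A ![e p, e j, e k, e l] * Phi (e j) (e k) (e l) (e i) = 0)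
    {i j k l : Fin 6} (hij : i < j) (hjk : j < k) (hkl : k < l) :
    A ![e i, e j, e k, e l] = 0 := by
  have h0124 : A ![e 0, e 1, e 2, e 4] = 0 := by
    rw [← map_vec4_cycle]; simpa [sum_mul_Phi, e] using hA 2 5
  have h0125 : A ![e 0, e 1, e 2, e 5] = 0 := by
    rw [← map_vec4_cycle]; simpa [sum_mul_Phi, e] using hA 2 4
  have h0134 : A ![e 0, e 1, e 3, e 4] = 0 := by
    rw [← map_vec4_cycle]; simpa [sum_mul_Phi, e] using hA 3 5
  have h0135 : A ![e 0, e 1, e 3, e 5] = 0 := by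
    rw [← map_vec4_cycle]; simpa [sum_mul_Phi, e] using hA 3 4
  have h0234 : A ![e 0, e 2, e 3, e 4] = 0 := by simpa [sum_mul_Phi, e] using hA 0 5
  have h0235 : A ![e 0, e 2, e 3, e 5] = 0 := by simpa [sum_mul_Phi, e] using hA 0 4
  have h1234 : A ![e 1, e 2, e 3, e 4] = 0 := by simpa [sum_mul_Phi, e] using hA 1 5
  have h1235 : A ![e 1, e 2, e 3, e 5] = 0 := by simpa [sum_mul_Phi, e] using hA 1 4
  have h0245 : A ![e 0, e 2, e 4, e 5] = 0 := by simpa [sum_mul_Phi, e] using hA 0 3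
  have h0345 : A ![e 0, e 3, e 4, e 5] = 0 := by simpa [sum_mul_Phi, e] using hA 0 2
  have h1245 : A ![e 1, e 2, e 4, e 5] = 0 := by simpa [sum_mul_Phi, e] using hA 1 3
  have h1345 : A ![e 1, e 3, e 4, e 5] = 0 := by simpa [sum_mul_Phi, e] using hA 1 2
  have hxy : A ![e 0, e 1, e 2, e 3] + A ![e 0, e 1, e 4, e 5] = 0 := by
    simpa [sum_mul_Phi, e, ← neg_add, ← mul_add] using hA 0 0
  have hxz : A ![e 0, e 1, e 2, e 3] + A ![e 2, e 3, e 4, e 5] = 0 := by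
    rw [← map_vec4_cycle A (e 2)]
    simpa [sum_mul_Phi, e, ← neg_add, ← mul_add] using hA 2 2
  have hyz : A ![e 0, e 1, e 4, e 5] + A ![e 2, e 3, e 4, e 5] = 0 := by
    rw [← map_vec4_cycle A (e 4), ← map_vec4_cycle A (e 4)]
    simpa [sum_mul_Phi, e, ← neg_add, ← mul_add] using hA 4 4
  have h0123 : A ![e 0, e 1, e 2, e 3] = 0 := by linarith
  have h0145 : A ![e 0, e 1, e 4, e 5] = 0 := by linarith
  have h2345 : A ![e 2, e 3, e 4, e 5] = 0 := by linarith
  fin_cases i <;> fin_cases j <;> (try simp at hij) <;> fin_cases k <;> (try simp at hjk) <;>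
    fin_cases l <;> (try simp at hkl) <;> assumption

end Contraction

theorem coe_basisFun_eq_e : ⇑(Pi.basisFun ℝ (Fin 6)) = e := by
  funext i j; simp [e, Pi.single_apply]

theorem stmt0_general (A : (Fin 6 → ℝ) [⋀^Fin 4]→ₗ[ℝ] ℝ)
    (h1 : ∀ p i : Fin 6,
      ∑ j, ∑ k, ∑ l, A ![e p, e j, e k, e l] * Phi (e j) (e k) (e l) (e i) = 0) :
    A = 0 := by
  refine eq_zero_of_forall_strictMono (Pi.basisFun ℝ (Fin 6)) A fun v hv => ?_
  have hv4 : Pi.basisFun ℝ (Fin 6) ∘ v = ![e (v 0), e (v 1), e (v 2), e (v 3)] := by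
    rw [coe_basisFun_eq_e]; funext m; fin_cases m <;> rfl
  rw [hv4]
  exact map_increasing_eq_zero_of_contract_Phi A h1 (hv (by decide)) (hv (by decide))
    (hv (by decide))

/-- if every contraction e_p⌟A of an alternating 4-form A on ℝ⁶ lies in Λ³₁₂,
then A = 0. -/
theorem stmt0 (A : (Fin 6 → ℝ) [⋀^Fin 4]→ₗ[ℝ] ℝ)
    (h1 : ∀ p i : Fin 6,
      ∑ j, ∑ k, ∑ l, A ![e p, e j, e k, e l] * Phi (e j) (e k) (e l) (e i) = 0)
    (h2 : ∀ p : Fin 6,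
      ∑ j, ∑ k, ∑ l, A ![e p, e j, e k, e l] * Psip (e j) (e k) (e l) = 0)
    (h3 : ∀ p : Fin 6,
      ∑ j, ∑ k, ∑ l, A ![e p, e j, e k, e l] * Psim (e j) (e k) (e l) = 0) :
    A = 0 :=
  stmt0_general A h1
end
end

section
/- On the Lie algebra n_t (for every real t ≠ 0), the Nijenhuis tensor of J vanishes identically, N(X,Y) = 0 for all X,Y (so J is integrable), and the Chevalley–Eilenberg differentials of Θ⁺ and Θ⁻ vanish: dΘ⁺ = 0 and dΘ⁻ = 0 as alternating 4-forms. -/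
/-!
The bracket of `n_t` is `[X,Y] = c(X,Y) e₆` with `c = 2t(e₁₂ − e₃₄)`. This 2-form is
`J`-invariant, and for a bracket of this shape `J`-invariance of `c` is exactly what makes
the Nijenhuis tensor vanish. For the same shape of bracket the Chevalley–Eilenberg
differential of a 3-form `α` is `dα = −c ∧ ι_{e₆}α`. Here `ι_{e₆}Θ⁺ = −(e₁₄ + e₂₃)` and
`ι_{e₆}Θ⁻ = e₁₃ − e₂₄`, and each of them wedges to zero against `e₁₂ − e₃₄`, since every
product of monomials repeats an index.
-/

open scoped BigOperators

noncomputable section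

/-- The Lie bracket of 𝔫_t: [e₁,e₂] = 2t·e₆, [e₃,e₄] = −2t·e₆ (bilinear extension). -/
def brN (t : ℝ) (X Y : Fin 6 → ℝ) : Fin 6 → ℝ :=
  (2 * t * two 0 1 X Y - 2 * t * two 2 3 X Y) • e 5

/-- The torsion 3-form T = −2t(e₁₂₆ − e₃₄₆) on 𝔫_t. -/
def TN (t : ℝ) (X Y Z : Fin 6 → ℝ) : ℝ :=
  -2 * t * (three 0 1 5 X Y Z - three 2 3 5 X Y Z)

lemma Jc_smul (a : ℝ) (X : Fin 6 → ℝ) : Jc (a • X) = a • Jc X := by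
  funext i; fin_cases i <;> simp [Jc]

lemma Jc_Jc (X : Fin 6 → ℝ) : Jc (Jc X) = -X := by
  funext i; fin_cases i <;> simp [Jc]

/-- Wedge product of 2-forms, normalized as the sum over (2,2)-shuffles. -/
def wedge2 (β γ : (Fin 6 → ℝ) → (Fin 6 → ℝ) → ℝ) (X Y Z W : Fin 6 → ℝ) : ℝ :=
  β X Y * γ Z W - β X Z * γ Y W + β X W * γ Y Z
    + β Y Z * γ X W - β Y W * γ X Z + β Z W * γ X Y

section RankOneBracket

variable (c : (Fin 6 → ℝ) → (Fin 6 → ℝ) → ℝ) (v : Fin 6 → ℝ)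

theorem Nij_smul_bracket_eq_zero (hJ : ∀ X Y, c (Jc X) (Jc Y) = c X Y)
    (hneg : ∀ X Y, c X (-Y) = -c X Y) (X Y : Fin 6 → ℝ) :
    Nij (fun X Y => c X Y • v) X Y = 0 := by
  have hmixed : c X (Jc Y) = -c (Jc X) Y := by rw [← hJ, Jc_Jc, hneg]
  simp only [Nij, Jc_smul, hJ, hmixed]
  module

theorem d3_smul_bracket (α : (Fin 6 → ℝ) → (Fin 6 → ℝ) → (Fin 6 → ℝ) → ℝ)
    (hα : ∀ (a : ℝ) Y Z, α (a • v) Y Z = a * α v Y Z) (X Y Z W : Fin 6 → ℝ) :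
    d3 (fun X Y => c X Y • v) α X Y Z W = -wedge2 c (α v) X Y Z W := by
  simp only [d3, wedge2, hα]
  ring

end RankOneBracket

lemma three_smul_left (i j k : Fin 6) (a : ℝ) (X Y Z : Fin 6 → ℝ) :
    three i j k (a • X) Y Z = a * three i j k X Y Z := by
  simp only [three, Pi.smul_apply, smul_eq_mul]
  ring

lemma Thp_smul_left (a : ℝ) (X Y Z : Fin 6 → ℝ) : Thp (a • X) Y Z = a * Thp X Y Z := by
  simp only [Thp, three_smul_left]
  ring

lemma Thm_smul_left (a : ℝ) (X Y Z : Fin 6 → ℝ) : Thm (a • X) Y Z = a * Thm X Y Z := by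
  simp only [Thm, three_smul_left]
  ring

lemma Thp_e_five (Y Z : Fin 6 → ℝ) : Thp (e 5) Y Z = -(two 0 3 Y Z + two 1 2 Y Z) := by
  simp only [Thp, three, two, e, Fin.isValue, Fin.reduceEq, ↓reduceIte]
  ring

lemma Thm_e_five (Y Z : Fin 6 → ℝ) : Thm (e 5) Y Z = two 0 2 Y Z - two 1 3 Y Z := by
  simp only [Thm, three, two, e, Fin.isValue, Fin.reduceEq, ↓reduceIte]
  ring

/-- The 2-form `−de₆` of `n_t`. -/
def brNCoeff (t : ℝ) (X Y : Fin 6 → ℝ) : ℝ := 2 * t * two 0 1 X Y - 2 * t * two 2 3 X Y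

lemma brN_eq_smul (t : ℝ) : brN t = fun X Y => brNCoeff t X Y • e 5 := rfl

lemma brNCoeff_Jc (t : ℝ) (X Y : Fin 6 → ℝ) : brNCoeff t (Jc X) (Jc Y) = brNCoeff t X Y := by
  simp only [brNCoeff, two, Jc, Matrix.cons_val_zero, Matrix.cons_val_one, Matrix.cons_val]
  ring

lemma brNCoeff_neg_right (t : ℝ) (X Y : Fin 6 → ℝ) : brNCoeff t X (-Y) = -brNCoeff t X Y := by
  simp only [brNCoeff, two, Pi.neg_apply]
  ring

lemma wedge2_brNCoeff_Thp_e_five (t : ℝ) (X Y Z W : Fin 6 → ℝ) :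
    wedge2 (brNCoeff t) (Thp (e 5)) X Y Z W = 0 := by
  simp only [wedge2, brNCoeff, Thp_e_five, two]
  ring

lemma wedge2_brNCoeff_Thm_e_five (t : ℝ) (X Y Z W : Fin 6 → ℝ) :
    wedge2 (brNCoeff t) (Thm (e 5)) X Y Z W = 0 := by
  simp only [wedge2, brNCoeff, Thm_e_five, two]
  ring

theorem stmt3_general (t : ℝ) :
    (∀ X Y : Fin 6 → ℝ, Nij (brN t) X Y = 0) ∧
    (∀ X Y Z W : Fin 6 → ℝ, d3 (brN t) Thp X Y Z W = 0) ∧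
    (∀ X Y Z W : Fin 6 → ℝ, d3 (brN t) Thm X Y Z W = 0) := by
  rw [brN_eq_smul]
  refine ⟨fun X Y => ?_, fun X Y Z W => ?_, fun X Y Z W => ?_⟩
  · exact Nij_smul_bracket_eq_zero _ _ (brNCoeff_Jc t) (brNCoeff_neg_right t) X Y
  · rw [d3_smul_bracket _ _ _ (Thp_smul_left · (e 5)), wedge2_brNCoeff_Thp_e_five, neg_zero]
  · rw [d3_smul_bracket _ _ _ (Thm_smul_left · (e 5)), wedge2_brNCoeff_Thm_e_five, neg_zero]

/-- on 𝔫_t (t ≠ 0): N ≡ 0 and dΘ⁺ = dΘ⁻ = 0. -/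
theorem stmt3 (t : ℝ) (ht : t ≠ 0) :
    (∀ X Y : Fin 6 → ℝ, Nij (brN t) X Y = 0) ∧
    (∀ X Y Z W : Fin 6 → ℝ, d3 (brN t) Thp X Y Z W = 0) ∧
    (∀ X Y Z W : Fin 6 → ℝ, d3 (brN t) Thm X Y Z W = 0) :=
  stmt3_general t
end
end

section
/- On the Lie algebra n_t (for every real t ≠ 0), let ∇ be the torsion connection associated with the 3-form T = −2t(e₁₂₆ − e₃₄₆). Then: (1) ∇_X(JY) = J(∇_X Y) for all X,Y (∇J = 0); (2) ∇Θ⁺ = 0 and ∇Θ⁻ = 0; (3) the torsion of ∇ satisfies g(∇_X Y − ∇_Y X − [X,Y], Z) = T(X,Y,Z) for all X,Y,Z; (4) the Lee form vanishes: θ(X) = −½ Σᵢ T(JX, eᵢ, Jeᵢ) = 0 for all X (the Hermitian structure is balanced). -/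
open scoped BigOperators

noncomputable section

/-!
On `𝔫_t` the torsion connection is `∇_X = 2t X⁶ · holGen`, where `holGen` is `−J` on `⟨e₁, e₂⟩`,
`J` on `⟨e₃, e₄⟩` and `0` on `⟨e₅, e₆⟩`. It commutes with `J` and has complex trace zero, so it lies
in `𝔰𝔲(3)` and annihilates `J`, `Θ⁺` and `Θ⁻`. The torsion identity holds for every skew bracket
and every 3-form, by the symmetry of the defining formula of `∇`. The Lee form vanishes because
`T = −2t (e₁₂ − e₃₄) ∧ e₆` and `e₁₂`, `e₃₄` have the same trace against `J`.
-/

lemma gIP_neg_left (v w : Fin 6 → ℝ) : gIP (-v) w = -gIP v w := by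
  simp [gIP]

lemma gIP_e (v : Fin 6 → ℝ) (m : Fin 6) : gIP v (e m) = v m := by
  simp [gIP, e]

lemma e_eq_single (i : Fin 6) : e i = Pi.single i 1 := by
  ext j
  simp [e, Pi.single_apply]

lemma IsLinearMap.eq_gIP_e {f : (Fin 6 → ℝ) → ℝ} (hf : IsLinearMap ℝ f) (Z : Fin 6 → ℝ) :
    f Z = gIP (fun m => f (e m)) Z := by
  have hZ : f Z = IsLinearMap.mk' f hf (∑ i, Z i • Pi.single i 1) := by
    rw [← pi_eq_sum_univ']
    rfl
  simp [hZ, gIP, e_eq_single, mul_comm]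

section Torsion

variable {br : (Fin 6 → ℝ) → (Fin 6 → ℝ) → (Fin 6 → ℝ)}
  {T : (Fin 6 → ℝ) → (Fin 6 → ℝ) → (Fin 6 → ℝ) → ℝ}

lemma nab_sub_nab_sub_br_apply (hbr : ∀ X Y, br X Y = -br Y X)
    (hT : ∀ X Y Z, T X Y Z = -T Y X Z) (X Y : Fin 6 → ℝ) (m : Fin 6) :
    (nab br T X Y - nab br T Y X - br X Y) m = T X Y (e m) := by
  rw [Pi.sub_apply, Pi.sub_apply, ← gIP_e (br X Y) m]
  simp only [nab, hbr Y X, hbr (e m) X, hbr (e m) Y, hT Y X, gIP_neg_left]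
  ring

lemma gIP_nab_sub_nab_sub_br (hbr : ∀ X Y, br X Y = -br Y X)
    (hT : ∀ X Y Z, T X Y Z = -T Y X Z) (hTlin : ∀ X Y, IsLinearMap ℝ (T X Y))
    (X Y Z : Fin 6 → ℝ) :
    gIP (nab br T X Y - nab br T Y X - br X Y) Z = T X Y Z := by
  rw [(hTlin X Y).eq_gIP_e Z]
  congr 1
  ext m
  exact nab_sub_nab_sub_br_apply hbr hT X Y m

end Torsion

lemma brN_swap (t : ℝ) (X Y : Fin 6 → ℝ) : brN t X Y = -brN t Y X := by
  rw [brN, brN, ← neg_smul]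
  congr 1
  simp only [two]
  ring

lemma TN_swap (t : ℝ) (X Y Z : Fin 6 → ℝ) : TN t X Y Z = -TN t Y X Z := by
  simp only [TN, three]
  ring

lemma isLinearMap_TN (t : ℝ) (X Y : Fin 6 → ℝ) : IsLinearMap ℝ (TN t X Y) where
  map_add Z W := by simp only [TN, three, Pi.add_apply]; ring
  map_smul c Z := by simp only [TN, three, Pi.smul_apply, smul_eq_mul]; ring

def holGen (Y : Fin 6 → ℝ) : Fin 6 → ℝ := ![Y 1, -Y 0, -Y 3, Y 2, 0, 0]

lemma nab_brN_TN (t : ℝ) (X : Fin 6 → ℝ) :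
    nab (brN t) (TN t) X = fun Y => (2 * t * X 5) • holGen Y := by
  ext Y m
  fin_cases m <;> simp [nab, brN, TN, gIP, two, three, e, holGen] <;> ring

lemma holGen_Jc (Y : Fin 6 → ℝ) : holGen (Jc Y) = Jc (holGen Y) := by
  ext m
  fin_cases m <;> simp [holGen, Jc]

lemma Jc_smul_s4 (c : ℝ) (Y : Fin 6 → ℝ) : Jc (c • Y) = c • Jc Y := by
  ext m
  fin_cases m <;> simp [Jc]

def endoAction3 (A : (Fin 6 → ℝ) → (Fin 6 → ℝ)) (α : (Fin 6 → ℝ) → (Fin 6 → ℝ) → (Fin 6 → ℝ) → ℝ)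
    (Y Z V : Fin 6 → ℝ) : ℝ :=
  -α (A Y) Z V - α Y (A Z) V - α Y Z (A V)

lemma nabForm3_eq_endoAction3 (br : (Fin 6 → ℝ) → (Fin 6 → ℝ) → (Fin 6 → ℝ))
    (T α : (Fin 6 → ℝ) → (Fin 6 → ℝ) → (Fin 6 → ℝ) → ℝ) (X : Fin 6 → ℝ) :
    nabForm3 br T α X = endoAction3 (nab br T X) α := rfl

lemma endoAction3_smul_holGen_Thp (c : ℝ) (Y Z V : Fin 6 → ℝ) :
    endoAction3 (fun Y => c • holGen Y) Thp Y Z V = 0 := by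
  simp only [endoAction3, Thp, three, holGen, Pi.smul_apply, smul_eq_mul, Matrix.cons_val]
  ring

lemma endoAction3_smul_holGen_Thm (c : ℝ) (Y Z V : Fin 6 → ℝ) :
    endoAction3 (fun Y => c • holGen Y) Thm Y Z V = 0 := by
  simp only [endoAction3, Thm, three, holGen, Pi.smul_apply, smul_eq_mul, Matrix.cons_val]
  ring

lemma sum_three015_e_Jc_e (W : Fin 6 → ℝ) : ∑ i, three 0 1 5 W (e i) (Jc (e i)) = 2 * W 5 := by
  simp only [three, e, Jc, Fin.sum_univ_six, Matrix.cons_val, Fin.reduceEq, ↓reduceIte]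
  ring

lemma sum_three235_e_Jc_e (W : Fin 6 → ℝ) : ∑ i, three 2 3 5 W (e i) (Jc (e i)) = 2 * W 5 := by
  simp only [three, e, Jc, Fin.sum_univ_six, Matrix.cons_val, Fin.reduceEq, ↓reduceIte]
  ring

theorem stmt4_general (t : ℝ) :
    (∀ X Y : Fin 6 → ℝ, nab (brN t) (TN t) X (Jc Y) = Jc (nab (brN t) (TN t) X Y)) ∧
    (∀ X Y Z V : Fin 6 → ℝ, nabForm3 (brN t) (TN t) Thp X Y Z V = 0) ∧
    (∀ X Y Z V : Fin 6 → ℝ, nabForm3 (brN t) (TN t) Thm X Y Z V = 0) ∧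
    (∀ X Y Z : Fin 6 → ℝ,
      gIP (nab (brN t) (TN t) X Y - nab (brN t) (TN t) Y X - brN t X Y) Z = TN t X Y Z) ∧
    (∀ X : Fin 6 → ℝ, -(1/2) * ∑ i, TN t (Jc X) (e i) (Jc (e i)) = 0) := by
  refine ⟨fun X Y => ?_, fun X Y Z V => ?_, fun X Y Z V => ?_,
    gIP_nab_sub_nab_sub_br (brN_swap t) (TN_swap t) (isLinearMap_TN t), fun X => ?_⟩
  · simp only [nab_brN_TN, holGen_Jc, Jc_smul_s4]
  · rw [nabForm3_eq_endoAction3, nab_brN_TN, endoAction3_smul_holGen_Thp]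
  · rw [nabForm3_eq_endoAction3, nab_brN_TN, endoAction3_smul_holGen_Thm]
  · simp only [TN, ← Finset.mul_sum, Finset.sum_sub_distrib, sum_three015_e_Jc_e,
      sum_three235_e_Jc_e, sub_self, mul_zero]

/-- on 𝔫_t (t ≠ 0), the torsion connection ∇ of T = −2t(e₁₂₆ − e₃₄₆) satisfies
∇J = 0, ∇Θ⁺ = ∇Θ⁻ = 0, has torsion T, and the Lee form vanishes. -/
theorem stmt4 (t : ℝ) (ht : t ≠ 0) :
    (∀ X Y : Fin 6 → ℝ, nab (brN t) (TN t) X (Jc Y) = Jc (nab (brN t) (TN t) X Y)) ∧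
    (∀ X Y Z V : Fin 6 → ℝ, nabForm3 (brN t) (TN t) Thp X Y Z V = 0) ∧
    (∀ X Y Z V : Fin 6 → ℝ, nabForm3 (brN t) (TN t) Thm X Y Z V = 0) ∧
    (∀ X Y Z : Fin 6 → ℝ,
      gIP (nab (brN t) (TN t) X Y - nab (brN t) (TN t) Y X - brN t X Y) Z = TN t X Y Z) ∧
    (∀ X : Fin 6 → ℝ, -(1/2) * ∑ i, TN t (Jc X) (e i) (Jc (e i)) = 0) :=
  stmt4_general t
end
end

section
/- On the Lie algebra s^δ_{r,t} (δ = ±1, r ≠ 0, t ≠ 0 real), the Nijenhuis tensor of J vanishes identically, N(X,Y) = 0 for all X,Y (so J is integrable), and the Chevalley–Eilenberg differentials of Θ⁺ and Θ⁻ vanish: dΘ⁺ = 0 and dΘ⁻ = 0 as alternating 4-forms. -/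
open scoped BigOperators

noncomputable section

/-- The Lie bracket of s^δ_{r,t}: [e₂,e₅]=(2/t)e₁, [e₁,e₅]=−(2/t)e₂, [e₄,e₅]=−(2/t)e₃,
[e₃,e₅]=(2/t)e₄, [e₁,e₂]=(2δt/r²)e₆, [e₃,e₄]=−(2δt/r²)e₆ (bilinear extension). -/
def brS (δ r t : ℝ) (X Y : Fin 6 → ℝ) : Fin 6 → ℝ :=
  ((2 / t) * two 1 4 X Y) • e 0 + (-(2 / t) * two 0 4 X Y) • e 1
    + (-(2 / t) * two 3 4 X Y) • e 2 + ((2 / t) * two 2 4 X Y) • e 3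
    + ((2 * δ * t / r ^ 2) * two 0 1 X Y - (2 * δ * t / r ^ 2) * two 2 3 X Y) • e 5

/-- The torsion 3-form T = −(2δt/r²)(e₁₂₆ − e₃₄₆) on s^δ_{r,t}. -/
def TS (δ r t : ℝ) (X Y Z : Fin 6 → ℝ) : ℝ :=
  -(2 * δ * t / r ^ 2) * (three 0 1 5 X Y Z - three 2 3 5 X Y Z)

/-!
Write θ¹ = e¹ + ie², θ² = e³ + ie⁴, θ³ = e⁵ + ie⁶ for the dual (1,0)-coframe. The structure
equations of s^δ_{r,t} are

  dθ¹ = (2i/t) θ¹ ∧ e⁵,   dθ² = −(2i/t) θ² ∧ e⁵,   dθ³ = −(2iδt/r²)(e¹² − e³⁴).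

No dθᵏ has a (0,2)-part, which is the integrability of J. In dΘ = dθ¹∧θ²∧θ³ − θ¹∧dθ²∧θ³ +
θ¹∧θ²∧dθ³ the first two terms cancel, and the last vanishes because e¹² − e³⁴ has type (1,1).
-/

theorem brS_eq_vecCons (δ r t : ℝ) (X Y : Fin 6 → ℝ) :
    brS δ r t X Y = ![(2 / t) * two 1 4 X Y, -(2 / t) * two 0 4 X Y,
      -(2 / t) * two 3 4 X Y, (2 / t) * two 2 4 X Y, 0,
      (2 * δ * t / r ^ 2) * (two 0 1 X Y - two 2 3 X Y)] := by
  ext m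
  fin_cases m <;>
    simp only [brS, e, Pi.add_apply, Pi.smul_apply, smul_eq_mul, Fin.reduceFinMk, Fin.zero_eta,
      Fin.mk_one, Fin.isValue, Matrix.cons_val, Fin.reduceEq, ↓reduceIte] <;> ring

theorem Nij_brS (δ r t : ℝ) (X Y : Fin 6 → ℝ) : Nij (brS δ r t) X Y = 0 := by
  ext m
  fin_cases m <;>
    simp only [Nij, brS_eq_vecCons, Jc, two, Pi.sub_apply, Pi.zero_apply, Fin.reduceFinMk,
      Fin.zero_eta, Fin.mk_one, Fin.isValue, Matrix.cons_val] <;> ring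

theorem d3_brS_Thp (δ r t : ℝ) (X Y Z W : Fin 6 → ℝ) : d3 (brS δ r t) Thp X Y Z W = 0 := by
  simp only [d3, Thp, three, brS_eq_vecCons, two, Matrix.cons_val]
  ring

theorem d3_brS_Thm (δ r t : ℝ) (X Y Z W : Fin 6 → ℝ) : d3 (brS δ r t) Thm X Y Z W = 0 := by
  simp only [d3, Thm, three, brS_eq_vecCons, two, Matrix.cons_val]
  ring

theorem stmt7_general (δ r t : ℝ) :
    (∀ X Y : Fin 6 → ℝ, Nij (brS δ r t) X Y = 0) ∧
    (∀ X Y Z W : Fin 6 → ℝ, d3 (brS δ r t) Thp X Y Z W = 0) ∧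
    (∀ X Y Z W : Fin 6 → ℝ, d3 (brS δ r t) Thm X Y Z W = 0) :=
  ⟨Nij_brS δ r t, d3_brS_Thp δ r t, d3_brS_Thm δ r t⟩

/-- on s^δ_{r,t} (δ = ±1, r ≠ 0, t ≠ 0): N ≡ 0 and dΘ⁺ = dΘ⁻ = 0. -/
theorem stmt7 (δ r t : ℝ) (hδ : δ = 1 ∨ δ = -1) (hr : r ≠ 0) (ht : t ≠ 0) :
    (∀ X Y : Fin 6 → ℝ, Nij (brS δ r t) X Y = 0) ∧
    (∀ X Y Z W : Fin 6 → ℝ, d3 (brS δ r t) Thp X Y Z W = 0) ∧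
    (∀ X Y Z W : Fin 6 → ℝ, d3 (brS δ r t) Thm X Y Z W = 0) :=
  stmt7_general δ r t
end
end

section
/- On the Lie algebra s^δ_{r,t} (δ = ±1, r ≠ 0, t ≠ 0 real), the torsion 3-form T = −(2δt/r²)(e₁₂₆ − e₃₄₆) is parallel with respect to its torsion connection ∇: (∇_X T)(Y,Z,V) = 0 for all X,Y,Z,V. -/
/-!
The torsion connection of `T` is `∇_X = (2δt/r² X₆ − 2/t X₅) A`, where `A` is the infinitesimal
rotation of the planes ⟨e₁, e₂⟩ and ⟨e₃, e₄⟩. As a derivation of forms, `A` kills `e₁₂`, `e₃₄` and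
`e₆`, hence `T`, so `∇T = 0`.
-/

open scoped BigOperators

noncomputable section

def rotGen (Y : Fin 6 → ℝ) : Fin 6 → ℝ := ![Y 1, -Y 0, -Y 3, Y 2, 0, 0]

theorem nabForm3_eq_zero_of_nab_eq_smul
    {br : (Fin 6 → ℝ) → (Fin 6 → ℝ) → (Fin 6 → ℝ)}
    {T α : (Fin 6 → ℝ) → (Fin 6 → ℝ) → (Fin 6 → ℝ) → ℝ}
    (f : (Fin 6 → ℝ) → ℝ) (A : (Fin 6 → ℝ) → Fin 6 → ℝ)
    (hnab : ∀ X Y, nab br T X Y = f X • A Y)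
    (hα₁ : ∀ (c : ℝ) Y Z V, α (c • Y) Z V = c * α Y Z V)
    (hα₂ : ∀ (c : ℝ) Y Z V, α Y (c • Z) V = c * α Y Z V)
    (hα₃ : ∀ (c : ℝ) Y Z V, α Y Z (c • V) = c * α Y Z V)
    (hA : ∀ Y Z V, α (A Y) Z V + α Y (A Z) V + α Y Z (A V) = 0)
    (X Y Z V : Fin 6 → ℝ) : nabForm3 br T α X Y Z V = 0 := by
  rw [nabForm3, hnab, hnab, hnab, hα₁, hα₂, hα₃]
  linear_combination -f X * hA Y Z V

section

variable (δ r t : ℝ)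

theorem nab_brS_TS (X Y : Fin 6 → ℝ) :
    nab (brS δ r t) (TS δ r t) X Y = (2 * δ * t / r ^ 2 * X 5 - 2 / t * X 4) • rotGen Y := by
  funext m
  fin_cases m <;>
  · simp only [nab, brS, TS, rotGen, gIP, two, three, e, Fin.sum_univ_six, Pi.add_apply,
      Pi.smul_apply, smul_eq_mul, Fin.zero_eta, Fin.mk_one, Fin.reduceFinMk, Fin.isValue,
      Fin.reduceEq, ↓reduceIte, Matrix.cons_val]
    ring

theorem TS_smul_left (c : ℝ) (Y Z V : Fin 6 → ℝ) : TS δ r t (c • Y) Z V = c * TS δ r t Y Z V := by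
  simp only [TS, three, Pi.smul_apply, smul_eq_mul]
  ring

theorem TS_smul_middle (c : ℝ) (Y Z V : Fin 6 → ℝ) : TS δ r t Y (c • Z) V = c * TS δ r t Y Z V := by
  simp only [TS, three, Pi.smul_apply, smul_eq_mul]
  ring

theorem TS_smul_right (c : ℝ) (Y Z V : Fin 6 → ℝ) : TS δ r t Y Z (c • V) = c * TS δ r t Y Z V := by
  simp only [TS, three, Pi.smul_apply, smul_eq_mul]
  ring

theorem TS_rotGen (Y Z V : Fin 6 → ℝ) :
    TS δ r t (rotGen Y) Z V + TS δ r t Y (rotGen Z) V + TS δ r t Y Z (rotGen V) = 0 := by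
  simp only [TS, three, rotGen, Matrix.cons_val]
  ring

end

theorem stmt9_general (δ r t : ℝ) :
    ∀ X Y Z V : Fin 6 → ℝ, nabForm3 (brS δ r t) (TS δ r t) (TS δ r t) X Y Z V = 0 :=
  nabForm3_eq_zero_of_nab_eq_smul _ rotGen (nab_brS_TS δ r t) (TS_smul_left δ r t)
    (TS_smul_middle δ r t) (TS_smul_right δ r t) (TS_rotGen δ r t)

/-- on s^δ_{r,t}, the torsion T = −(2δt/r²)(e₁₂₆ − e₃₄₆) is ∇-parallel. -/
theorem stmt9 (δ r t : ℝ) (hδ : δ = 1 ∨ δ = -1) (hr : r ≠ 0) (ht : t ≠ 0) :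
    ∀ X Y Z V : Fin 6 → ℝ, nabForm3 (brS δ r t) (TS δ r t) (TS δ r t) X Y Z V = 0 :=
  stmt9_general δ r t
end
end

section
/- On the Lie algebra g_t (for every real t ≠ 0), the torsion 3-form T = −(1/t)(3e₁₃₅ + e₁₄₆ + e₂₃₆ + e₂₄₅) is parallel with respect to its torsion connection ∇: (∇_X T)(Y,Z,V) = 0 for all X,Y,Z,V. -/
open scoped BigOperators

noncomputable section

/-- The Lie bracket of g_t (so(3,1) underlying sl(2,ℂ)), bilinear extension of
[e₃,e₅]=−(1/t)e₁, [e₄,e₆]=(1/t)e₁, [e₃,e₆]=−(1/t)e₂, [e₄,e₅]=−(1/t)e₂,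
[e₁,e₅]=(1/t)e₃, [e₂,e₆]=−(1/t)e₃, [e₁,e₆]=(1/t)e₄, [e₂,e₅]=(1/t)e₄,
[e₁,e₃]=−(1/t)e₅, [e₂,e₄]=(1/t)e₅, [e₁,e₄]=−(1/t)e₆, [e₂,e₃]=−(1/t)e₆. -/
def brG (t : ℝ) (X Y : Fin 6 → ℝ) : Fin 6 → ℝ :=
  (-(1 / t) * two 2 4 X Y + (1 / t) * two 3 5 X Y) • e 0
    + (-(1 / t) * two 2 5 X Y + -(1 / t) * two 3 4 X Y) • e 1
    + ((1 / t) * two 0 4 X Y + -(1 / t) * two 1 5 X Y) • e 2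
    + ((1 / t) * two 0 5 X Y + (1 / t) * two 1 4 X Y) • e 3
    + (-(1 / t) * two 0 2 X Y + (1 / t) * two 1 3 X Y) • e 4
    + (-(1 / t) * two 0 3 X Y + -(1 / t) * two 1 2 X Y) • e 5

/-- The torsion 3-form T = −(1/t)(3e₁₃₅ + e₁₄₆ + e₂₃₆ + e₂₄₅) on g_t. -/
def TG (t : ℝ) (X Y Z : Fin 6 → ℝ) : ℝ :=
  -(1 / t) * (3 * three 0 2 4 X Y Z + three 0 3 5 X Y Z
    + three 1 2 5 X Y Z + three 1 3 4 X Y Z)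

/-!
Identify ℝ⁶ with ℂ³ = ℝ³ ⊗ ℂ through z_k = e_{2k-1} + i e_{2k}. The torsion connection of g_t is
∇_X = -(2/t) (x × ·), where x ∈ ℝ³ is the real part of X and the cross product acts on real and
imaginary parts separately: an infinitesimal rotation. The torsion form is
T = -(1/t)(4 e₁₃₅ - Θ⁺), where e₁₃₅ is the determinant of the real parts and
Θ⁺ = Re(dz₁ ∧ dz₂ ∧ dz₃) the real part of the complex determinant. Infinitesimal rotations preserve
determinants (the Leibniz rule for the cross product), so ∇T = 0.
-/

open Matrix

theorem det_cross_derivation {R : Type*} [CommRing R] (x a b c : Fin 3 → R) :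
    det ![x ⨯₃ a, b, c] + det ![a, x ⨯₃ b, c] + det ![a, b, x ⨯₃ c] = 0 := by
  simp only [← triple_product_eq_det]
  rw [add_assoc, ← dotProduct_add, ← leibniz_cross, triple_product_permutation a x,
    triple_product_permutation x, ← cross_anticomm x a, dotProduct_neg, dotProduct_comm,
    add_neg_cancel]

def realPart3 (Y : Fin 6 → ℝ) : Fin 3 → ℝ := ![Y 0, Y 2, Y 4]

def toComplex3 (Y : Fin 6 → ℝ) : Fin 3 → ℂ := ![⟨Y 0, Y 1⟩, ⟨Y 2, Y 3⟩, ⟨Y 4, Y 5⟩]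

def crossRe (X Y : Fin 6 → ℝ) : Fin 6 → ℝ :=
  ![X 2 * Y 4 - X 4 * Y 2, X 2 * Y 5 - X 4 * Y 3, X 4 * Y 0 - X 0 * Y 4,
    X 4 * Y 1 - X 0 * Y 5, X 0 * Y 2 - X 2 * Y 0, X 0 * Y 3 - X 2 * Y 1]

lemma realPart3_crossRe (X Y : Fin 6 → ℝ) :
    realPart3 (crossRe X Y) = realPart3 X ⨯₃ realPart3 Y := by
  ext k; fin_cases k <;> simp [realPart3, crossRe, cross_apply]

lemma toComplex3_crossRe (X Y : Fin 6 → ℝ) :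
    toComplex3 (crossRe X Y) = (fun k => (realPart3 X k : ℂ)) ⨯₃ toComplex3 Y := by
  ext k; fin_cases k <;> apply Complex.ext <;> simp [realPart3, toComplex3, crossRe, cross_apply]

lemma three_024_eq_det (Y Z V : Fin 6 → ℝ) :
    three 0 2 4 Y Z V = det ![realPart3 Y, realPart3 Z, realPart3 V] := by
  rw [← triple_product_eq_det]
  simp only [three, realPart3, dotProduct, cross_apply, Fin.sum_univ_three, Fin.isValue,
    cons_val_zero, cons_val_one, cons_val]
  ring

lemma Thp_eq_re_det (Y Z V : Fin 6 → ℝ) :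
    Thp Y Z V = (det ![toComplex3 Y, toComplex3 Z, toComplex3 V]).re := by
  rw [← triple_product_eq_det]
  simp only [Thp, three, toComplex3, dotProduct, cross_apply, Fin.sum_univ_three, Fin.isValue,
    cons_val_zero, cons_val_one, cons_val, Complex.add_re, Complex.sub_re, Complex.sub_im,
    Complex.mul_re, Complex.mul_im]
  ring

lemma three_024_crossRe_invariant (X Y Z V : Fin 6 → ℝ) :
    three 0 2 4 (crossRe X Y) Z V + three 0 2 4 Y (crossRe X Z) V
      + three 0 2 4 Y Z (crossRe X V) = 0 := by
  simp only [three_024_eq_det, realPart3_crossRe]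
  exact det_cross_derivation _ _ _ _

lemma Thp_crossRe_invariant (X Y Z V : Fin 6 → ℝ) :
    Thp (crossRe X Y) Z V + Thp Y (crossRe X Z) V + Thp Y Z (crossRe X V) = 0 := by
  simp only [Thp_eq_re_det, toComplex3_crossRe, ← Complex.add_re, det_cross_derivation,
    Complex.zero_re]

lemma nab_brG_TG (t : ℝ) (X Y : Fin 6 → ℝ) :
    nab (brG t) (TG t) X Y = (-(2 / t)) • crossRe X Y := by
  ext m
  fin_cases m <;>
  · simp only [nab, gIP, brG, TG, two, three, e, crossRe, Fin.sum_univ_six, Pi.add_apply,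
      Pi.smul_apply, smul_eq_mul, Fin.isValue, Fin.reduceEq, ↓reduceIte, Fin.zero_eta, Fin.mk_one,
      Fin.reduceFinMk, cons_val_zero, cons_val_one, cons_val]
    ring

theorem stmt13_general (t : ℝ) :
    ∀ X Y Z V : Fin 6 → ℝ, nabForm3 (brG t) (TG t) (TG t) X Y Z V = 0 := by
  intro X Y Z V
  have hre := three_024_crossRe_invariant X Y Z V
  have hΘ := Thp_crossRe_invariant X Y Z V
  simp only [Thp, three] at hre hΘ
  simp only [nabForm3, nab_brG_TG, TG, three, Pi.smul_apply, smul_eq_mul]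
  linear_combination (-(2 / t)) / t * (4 * hre - hΘ)

/-- on g_t (t ≠ 0), T = −(1/t)(3e₁₃₅ + e₁₄₆ + e₂₃₆ + e₂₄₅) is ∇-parallel. -/
theorem stmt13 (t : ℝ) (ht : t ≠ 0) :
    ∀ X Y Z V : Fin 6 → ℝ, nabForm3 (brG t) (TG t) (TG t) X Y Z V = 0 :=
  stmt13_general t
end
end

section
/- On the Lie algebra g_t (for every real t ≠ 0), the curvature R of the torsion connection ∇ associated with T = −(1/t)(3e₁₃₅ + e₁₄₆ + e₂₃₆ + e₂₄₅) is an SU(3)-instanton: for all X,Y,Z,V, (1) R(X,Y,Z,V) = R(Z,V,X,Y); (2) R(JX,JY,Z,V) = R(X,Y,Z,V); (3) Σᵢ R(eᵢ, Jeᵢ, Z, V) = 0 (sum over i = 1,…,6). -/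
/-!
In the complex coordinates `z_k = X_{2k} + i X_{2k+1}` of `ℝ⁶ = ℂ³`, `J` is multiplication by `i`
and the torsion connection is `∇_X Z = -(2/t) Re(z_X) × z_Z`, the cross product acting on real and
imaginary parts separately. The Jacobi identity for `×` turns the curvature into
`R(X,Y)Z = (2/t²) ω(X,Y) × z_Z` with `ω(X,Y) = Re(z_X × conj z_Y)`, so that
`R(X,Y,Z,V) = (2/t²) ω(X,Y) · ω(Z,V)`. Pair symmetry is then the symmetry of the dot product,
`J`-invariance is `ω(JX,JY) = ω(X,Y)`, and `ω(eᵢ, Jeᵢ) = 0` because every `eᵢ` is purely real or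
purely imaginary.
-/

open scoped BigOperators

noncomputable section

open Matrix

def re3 (X : Fin 6 → ℝ) : Fin 3 → ℝ := ![X 0, X 2, X 4]

def im3 (X : Fin 6 → ℝ) : Fin 3 → ℝ := ![X 1, X 3, X 5]

lemma re3_sub (X Y : Fin 6 → ℝ) : re3 (X - Y) = re3 X - re3 Y := by
  ext i; fin_cases i <;> rfl

lemma im3_sub (X Y : Fin 6 → ℝ) : im3 (X - Y) = im3 X - im3 Y := by
  ext i; fin_cases i <;> rfl

lemma re3_Jc (X : Fin 6 → ℝ) : re3 (Jc X) = -im3 X := by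
  ext i; fin_cases i <;> rfl

lemma im3_Jc (X : Fin 6 → ℝ) : im3 (Jc X) = re3 X := by
  ext i; fin_cases i <;> rfl

lemma gIP_eq_re3_dotProduct_add_im3_dotProduct (X Y : Fin 6 → ℝ) :
    gIP X Y = re3 X ⬝ᵥ re3 Y + im3 X ⬝ᵥ im3 Y := by
  simp only [gIP, re3, im3, dotProduct, Fin.sum_univ_six, Fin.sum_univ_three, Fin.isValue,
    cons_val_zero, cons_val_one, cons_val]
  ring

lemma re3_brG (t : ℝ) (X Y : Fin 6 → ℝ) :
    re3 (brG t X Y) = (1 / t) • (im3 X ⨯₃ im3 Y - re3 X ⨯₃ re3 Y) := by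
  ext i
  fin_cases i <;>
    simp only [re3, im3, brG, two, e, cross_apply, Pi.add_apply, Pi.sub_apply, Pi.smul_apply,
      smul_eq_mul, Fin.isValue, Fin.reduceEq, ↓reduceIte, Fin.zero_eta, Fin.mk_one, Fin.reduceFinMk,
      cons_val_zero, cons_val_one, cons_val] <;>
    ring

lemma re3_nab (t : ℝ) (X Y : Fin 6 → ℝ) :
    re3 (nab (brG t) (TG t) X Y) = -(2 / t) • (re3 X ⨯₃ re3 Y) := by
  ext i
  fin_cases i <;>
    simp only [re3, nab, brG, TG, gIP, two, three, e, cross_apply, Fin.sum_univ_six, Pi.add_apply,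
      Pi.smul_apply, smul_eq_mul, Fin.isValue, Fin.reduceEq, ↓reduceIte, Fin.zero_eta, Fin.mk_one,
      Fin.reduceFinMk, cons_val_zero, cons_val_one, cons_val] <;>
    ring

lemma im3_nab (t : ℝ) (X Y : Fin 6 → ℝ) :
    im3 (nab (brG t) (TG t) X Y) = -(2 / t) • (re3 X ⨯₃ im3 Y) := by
  ext i
  fin_cases i <;>
    simp only [re3, im3, nab, brG, TG, gIP, two, three, e, cross_apply, Fin.sum_univ_six,
      Pi.add_apply, Pi.smul_apply, smul_eq_mul, Fin.isValue, Fin.reduceEq, ↓reduceIte, Fin.zero_eta,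
      Fin.mk_one, Fin.reduceFinMk, cons_val_zero, cons_val_one, cons_val] <;>
    ring

def reCrossConj (X Y : Fin 6 → ℝ) : Fin 3 → ℝ := re3 X ⨯₃ re3 Y + im3 X ⨯₃ im3 Y

lemma curvature_cross_identity (t : ℝ) (u u' v v' z : Fin 3 → ℝ) :
    -(2 / t) • (u ⨯₃ (-(2 / t) • (u' ⨯₃ z))) - -(2 / t) • (u' ⨯₃ (-(2 / t) • (u ⨯₃ z)))
      - -(2 / t) • (((1 / t) • (v ⨯₃ v' - u ⨯₃ u')) ⨯₃ z)
      = (2 / t ^ 2) • ((u ⨯₃ u' + v ⨯₃ v') ⨯₃ z) := by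
  simp only [map_smul, map_sub, map_add, LinearMap.smul_apply, LinearMap.sub_apply,
    LinearMap.add_apply, cross_cross u u' z]
  module

lemma re3_Rmap (t : ℝ) (X Y Z : Fin 6 → ℝ) :
    re3 (Rmap (brG t) (TG t) X Y Z) = (2 / t ^ 2) • (reCrossConj X Y ⨯₃ re3 Z) := by
  simp only [Rmap, re3_sub, re3_nab, re3_brG, reCrossConj]
  exact curvature_cross_identity t _ _ _ _ _

lemma im3_Rmap (t : ℝ) (X Y Z : Fin 6 → ℝ) :
    im3 (Rmap (brG t) (TG t) X Y Z) = (2 / t ^ 2) • (reCrossConj X Y ⨯₃ im3 Z) := by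
  simp only [Rmap, im3_sub, im3_nab, re3_brG, reCrossConj]
  exact curvature_cross_identity t _ _ _ _ _

lemma cross_dotProduct {R : Type*} [CommRing R] (u v w : Fin 3 → R) : u ⨯₃ v ⬝ᵥ w = u ⬝ᵥ v ⨯₃ w := by
  rw [dotProduct_comm, triple_product_permutation]

lemma R4_brG_TG (t : ℝ) (X Y Z V : Fin 6 → ℝ) :
    R4 (brG t) (TG t) X Y Z V = 2 / t ^ 2 * (reCrossConj X Y ⬝ᵥ reCrossConj Z V) := by
  rw [R4, gIP_eq_re3_dotProduct_add_im3_dotProduct, re3_Rmap, im3_Rmap, smul_dotProduct,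
    smul_dotProduct, cross_dotProduct, cross_dotProduct, smul_eq_mul, smul_eq_mul, ← mul_add,
    ← dotProduct_add]
  rfl

lemma reCrossConj_Jc (X Y : Fin 6 → ℝ) : reCrossConj (Jc X) (Jc Y) = reCrossConj X Y := by
  simp only [reCrossConj, re3_Jc, im3_Jc, map_neg, LinearMap.neg_apply, neg_neg]
  exact add_comm _ _

lemma re3_e_eq_zero_or_im3_e_eq_zero (i : Fin 6) : re3 (e i) = 0 ∨ im3 (e i) = 0 := by
  fin_cases i <;> simp [re3, im3, e, ← List.ofFn_inj]

lemma reCrossConj_e_Jc_e (i : Fin 6) : reCrossConj (e i) (Jc (e i)) = 0 := by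
  simp only [reCrossConj, re3_Jc, im3_Jc]
  rcases re3_e_eq_zero_or_im3_e_eq_zero i with h | h <;> simp [h]

theorem stmt14_general (t : ℝ) :
    (∀ X Y Z V : Fin 6 → ℝ, R4 (brG t) (TG t) X Y Z V = R4 (brG t) (TG t) Z V X Y) ∧
    (∀ X Y Z V : Fin 6 → ℝ, R4 (brG t) (TG t) (Jc X) (Jc Y) Z V = R4 (brG t) (TG t) X Y Z V) ∧
    (∀ Z V : Fin 6 → ℝ, ∑ i, R4 (brG t) (TG t) (e i) (Jc (e i)) Z V = 0) := by
  refine ⟨fun X Y Z V => ?_, fun X Y Z V => ?_, fun Z V => ?_⟩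
  · rw [R4_brG_TG, R4_brG_TG, dotProduct_comm]
  · rw [R4_brG_TG, R4_brG_TG, reCrossConj_Jc]
  · simp [R4_brG_TG, reCrossConj_e_Jc_e]

/-- on g_t (t ≠ 0), the curvature of the torsion connection is an SU(3)-instanton. -/
theorem stmt14 (t : ℝ) (ht : t ≠ 0) :
    (∀ X Y Z V : Fin 6 → ℝ, R4 (brG t) (TG t) X Y Z V = R4 (brG t) (TG t) Z V X Y) ∧
    (∀ X Y Z V : Fin 6 → ℝ, R4 (brG t) (TG t) (Jc X) (Jc Y) Z V = R4 (brG t) (TG t) X Y Z V) ∧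
    (∀ Z V : Fin 6 → ℝ, ∑ i, R4 (brG t) (TG t) (e i) (Jc (e i)) Z V = 0) :=
  stmt14_general t
end
end

section
/- On the nilpotent Lie algebra 𝔫, the Nijenhuis tensor of J is totally skew-symmetric, nonzero, and equals −Ψ⁻ as a 3-form: g(N(X,Y),Z) = −Ψ⁻(X,Y,Z) for all X,Y,Z. Moreover, for the Chevalley–Eilenberg differential: dF = −3e₂₃₆, dΨ⁺ = 0, and dΨ⁻ = −(e₁₂₃₄ + e₁₂₅₆ + e₃₄₅₆) (= ∗F). -/
/-!
Writing the bracket of 𝔫 as an explicit coordinate vector turns every identity into a polynomial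
identity in the coordinates of the arguments. The skew-symmetries of `N` are then inherited from
the alternating form `Ψ⁻`, and `N(e₃, e₆) ≠ 0` because its `e₁`-component is `-Ψ⁻(e₃, e₆, e₁) = 1`.
-/

open scoped BigOperators

noncomputable section

/-- The Lie bracket of the nilpotent Lie algebra 𝔫: [e₃,e₆]=−e₁, [e₂,e₆]=−e₄, [e₂,e₃]=−e₅
(bilinear extension). -/
def brNil (X Y : Fin 6 → ℝ) : Fin 6 → ℝ :=
  (-two 2 5 X Y) • e 0 + (-two 1 5 X Y) • e 3 + (-two 1 2 X Y) • e 4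

/-- The torsion 3-form T = −2e₁₄₅ + e₁₃₆ + e₂₃₅ − e₂₄₆ on 𝔫. -/
def TNil (X Y Z : Fin 6 → ℝ) : ℝ :=
  -2 * three 0 3 4 X Y Z + three 0 2 5 X Y Z + three 1 2 4 X Y Z - three 1 3 5 X Y Z

theorem Psim_swap_left (X Y Z : Fin 6 → ℝ) : Psim Y X Z = -Psim X Y Z := by
  simp only [Psim, three]; ring

theorem Psim_swap_right (X Y Z : Fin 6 → ℝ) : Psim X Z Y = -Psim X Y Z := by
  simp only [Psim, three]; ring

theorem brNil_eq (X Y : Fin 6 → ℝ) :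
    brNil X Y = ![-two 2 5 X Y, 0, 0, -two 1 5 X Y, -two 1 2 X Y, 0] := by
  funext j
  fin_cases j <;> simp [brNil, e]

theorem gIP_Nij_brNil (X Y Z : Fin 6 → ℝ) : gIP (Nij brNil X Y) Z = -Psim X Y Z := by
  simp only [gIP, Nij, brNil_eq, Jc, two, Psim, three, Fin.sum_univ_six, Pi.sub_apply,
    Matrix.cons_val]
  ring

theorem Nij_brNil_ne_zero : Nij brNil (e 2) (e 5) ≠ 0 := by
  intro h
  have h₀ := gIP_Nij_brNil (e 2) (e 5) (e 0)
  rw [h] at h₀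
  simp [gIP, Psim, three, e] at h₀

theorem d2_brNil_Fform (X Y Z : Fin 6 → ℝ) :
    d2 brNil Fform X Y Z = -3 * three 1 2 5 X Y Z := by
  simp only [d2, brNil_eq, Fform, two, three, Matrix.cons_val]
  ring

theorem d3_brNil_Psip (X Y Z W : Fin 6 → ℝ) : d3 brNil Psip X Y Z W = 0 := by
  simp only [d3, brNil_eq, Psip, three, two, Matrix.cons_val]
  ring

theorem d3_brNil_Psim (X Y Z W : Fin 6 → ℝ) :
    d3 brNil Psim X Y Z W
      = -(four 0 1 2 3 X Y Z W + four 0 1 4 5 X Y Z W + four 2 3 4 5 X Y Z W) := by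
  simp only [d3, brNil_eq, Psim, four, three, two, Matrix.cons_val]
  ring

/-- on 𝔫, the Nijenhuis tensor is totally skew-symmetric, nonzero,
and equals −Ψ⁻; moreover dF = −3e₂₃₆, dΨ⁺ = 0 and dΨ⁻ = −(e₁₂₃₄ + e₁₂₅₆ + e₃₄₅₆). -/
theorem stmt15 :
    (∀ X Y Z : Fin 6 → ℝ, gIP (Nij brNil X Y) Z = -Psim X Y Z) ∧
    (∃ X Y : Fin 6 → ℝ, Nij brNil X Y ≠ 0) ∧
    (∀ X Y Z : Fin 6 → ℝ, gIP (Nij brNil X Y) Z = -gIP (Nij brNil Y X) Z) ∧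
    (∀ X Y Z : Fin 6 → ℝ, gIP (Nij brNil X Y) Z = -gIP (Nij brNil X Z) Y) ∧
    (∀ X Y Z : Fin 6 → ℝ, d2 brNil Fform X Y Z = -3 * three 1 2 5 X Y Z) ∧
    (∀ X Y Z W : Fin 6 → ℝ, d3 brNil Psip X Y Z W = 0) ∧
    (∀ X Y Z W : Fin 6 → ℝ, d3 brNil Psim X Y Z W
      = -(four 0 1 2 3 X Y Z W + four 0 1 4 5 X Y Z W + four 2 3 4 5 X Y Z W)) := by
  refine ⟨gIP_Nij_brNil, ⟨e 2, e 5, Nij_brNil_ne_zero⟩, fun X Y Z => ?_, fun X Y Z => ?_,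
    d2_brNil_Fform, d3_brNil_Psip, d3_brNil_Psim⟩
  · rw [gIP_Nij_brNil, gIP_Nij_brNil, Psim_swap_left, neg_neg]
  · rw [gIP_Nij_brNil, gIP_Nij_brNil, Psim_swap_right, neg_neg]
end
end

section
/- On the nilpotent Lie algebra 𝔫, both the torsion 3-form T = −2e₁₄₅ + e₁₃₆ + e₂₃₅ − e₂₄₆ and the Nijenhuis 3-form N = −Ψ⁻ are parallel with respect to the torsion connection ∇ associated with T: (∇_X T)(Y,Z,V) = 0 and (∇_X Ψ⁻)(Y,Z,V) = 0 for all X,Y,Z,V. -/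
open scoped BigOperators

noncomputable section

/-!
The torsion connection is computed explicitly: `∇_X = x₁ A₁ + x₄ A₄ + x₅ A₅`, where each `Aᵢ` is a
sum of two infinitesimal rotations of coordinate planes (subscripts are the paper's 1-based
indices, so `x₁ = X 0`). Since `∇_X` acts on forms as a derivation, linearly in `∇_X`, a 3-form is
parallel as soon as the three skew endomorphisms `Aᵢ` annihilate it, which is a finite check for
`T` and `Ψ⁻`.
-/

section DerivationAction

variable {R M : Type*} [CommRing R] [AddCommGroup M] [Module R M]

def act3 (A : M → M) (α : M → M → M → R) (Y Z V : M) : R :=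
  -α (A Y) Z V - α Y (A Z) V - α Y Z (A V)

structure IsTrilinear (α : M → M → M → R) : Prop where
  left : ∀ Z V, IsLinearMap R (α · Z V)
  mid : ∀ Y V, IsLinearMap R (α Y · V)
  right : ∀ Y Z, IsLinearMap R (α Y Z ·)

variable {α : M → M → M → R}

theorem act3_add (hα : IsTrilinear α) (A B : M → M) :
    act3 (A + B) α = act3 A α + act3 B α := by
  funext Y Z V
  simp only [act3, Pi.add_apply, (hα.left Z V).map_add, (hα.mid Y V).map_add,
    (hα.right Y Z).map_add]
  ring

theorem act3_smul (hα : IsTrilinear α) (c : R) (A : M → M) :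
    act3 (c • A) α = c • act3 A α := by
  funext Y Z V
  simp only [act3, Pi.smul_apply, (hα.left Z V).map_smul, (hα.mid Y V).map_smul,
    (hα.right Y Z).map_smul, smul_eq_mul]
  ring

end DerivationAction

theorem nabForm3_eq_act3 (br : (Fin 6 → ℝ) → (Fin 6 → ℝ) → (Fin 6 → ℝ))
    (T α : (Fin 6 → ℝ) → (Fin 6 → ℝ) → (Fin 6 → ℝ) → ℝ) (X : Fin 6 → ℝ) :
    nabForm3 br T α X = act3 (nab br T X) α :=
  rfl

def rot (i j : Fin 6) (Y : Fin 6 → ℝ) : Fin 6 → ℝ := Y i • e j - Y j • e i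

def nabGen₁ : (Fin 6 → ℝ) → Fin 6 → ℝ := rot 2 5 - rot 3 4

def nabGen₄ : (Fin 6 → ℝ) → Fin 6 → ℝ := rot 0 4 + rot 1 5

def nabGen₅ : (Fin 6 → ℝ) → Fin 6 → ℝ := rot 1 2 - rot 0 3

theorem nab_brNil_TNil (X : Fin 6 → ℝ) :
    nab brNil TNil X = X 0 • nabGen₁ + X 3 • nabGen₄ + X 4 • nabGen₅ := by
  funext Y m
  fin_cases m <;>
    simp only [nab, brNil, TNil, gIP, e, two, three, nabGen₁, nabGen₄, nabGen₅, rot,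
      Fin.sum_univ_six, Fin.zero_eta, Fin.mk_one, Fin.reduceFinMk, Fin.isValue, Fin.reduceEq,
      reduceIte, Pi.add_apply, Pi.sub_apply, Pi.smul_apply, smul_eq_mul] <;>
    ring

theorem isTrilinear_TNil : IsTrilinear TNil := by
  refine ⟨fun _ _ => ⟨?_, ?_⟩, fun _ _ => ⟨?_, ?_⟩, fun _ _ => ⟨?_, ?_⟩⟩ <;> intros <;>
    simp only [TNil, three, Pi.add_apply, Pi.smul_apply, smul_eq_mul] <;> ring

theorem isTrilinear_Psim : IsTrilinear Psim := by
  refine ⟨fun _ _ => ⟨?_, ?_⟩, fun _ _ => ⟨?_, ?_⟩, fun _ _ => ⟨?_, ?_⟩⟩ <;> intros <;>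
    simp only [Psim, three, Pi.add_apply, Pi.smul_apply, smul_eq_mul] <;> ring

theorem act3_nabGen_TNil :
    act3 nabGen₁ TNil = 0 ∧ act3 nabGen₄ TNil = 0 ∧ act3 nabGen₅ TNil = 0 := by
  refine ⟨?_, ?_, ?_⟩ <;> funext Y Z V <;>
    simp only [act3, TNil, three, nabGen₁, nabGen₄, nabGen₅, rot, e, Fin.isValue, Fin.reduceEq,
      reduceIte, Pi.add_apply, Pi.sub_apply, Pi.smul_apply, Pi.zero_apply, smul_eq_mul] <;> ring

theorem act3_nabGen_Psim :
    act3 nabGen₁ Psim = 0 ∧ act3 nabGen₄ Psim = 0 ∧ act3 nabGen₅ Psim = 0 := by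
  refine ⟨?_, ?_, ?_⟩ <;> funext Y Z V <;>
    simp only [act3, Psim, three, nabGen₁, nabGen₄, nabGen₅, rot, e, Fin.isValue, Fin.reduceEq,
      reduceIte, Pi.add_apply, Pi.sub_apply, Pi.smul_apply, Pi.zero_apply, smul_eq_mul] <;> ring

theorem nabForm3_brNil_TNil_eq_zero {α : (Fin 6 → ℝ) → (Fin 6 → ℝ) → (Fin 6 → ℝ) → ℝ}
    (hα : IsTrilinear α) (h₁ : act3 nabGen₁ α = 0) (h₄ : act3 nabGen₄ α = 0)
    (h₅ : act3 nabGen₅ α = 0) (X Y Z V : Fin 6 → ℝ) : nabForm3 brNil TNil α X Y Z V = 0 := by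
  rw [nabForm3_eq_act3, nab_brNil_TNil]
  simp only [act3_add hα, act3_smul hα, h₁, h₄, h₅, smul_zero, add_zero, Pi.zero_apply]

/-- on 𝔫, both T = −2e₁₄₅ + e₁₃₆ + e₂₃₅ − e₂₄₆ and N = −Ψ⁻ are ∇-parallel. -/
theorem stmt17 :
    (∀ X Y Z V : Fin 6 → ℝ, nabForm3 brNil TNil TNil X Y Z V = 0) ∧
    (∀ X Y Z V : Fin 6 → ℝ, nabForm3 brNil TNil Psim X Y Z V = 0) := by
  obtain ⟨hT₁, hT₄, hT₅⟩ := act3_nabGen_TNil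
  obtain ⟨hΨ₁, hΨ₄, hΨ₅⟩ := act3_nabGen_Psim
  exact ⟨nabForm3_brNil_TNil_eq_zero isTrilinear_TNil hT₁ hT₄ hT₅,
    nabForm3_brNil_TNil_eq_zero isTrilinear_Psim hΨ₁ hΨ₄ hΨ₅⟩
end
end

section
/- On the nilpotent Lie algebra 𝔫, the torsion connection ∇ associated with T = −2e₁₄₅ + e₁₃₆ + e₂₃₅ − e₂₄₆ is Einstein with negative scalar curvature: its Ricci tensor Ric(X,Y) = Σₐ R(eₐ, X, Y, eₐ) (sum over a = 1,…,6) satisfies Ric(X,Y) = −2g(X,Y) for all X,Y, and its scalar curvature Scal = Σᵢ Ric(eᵢ,eᵢ) equals −12. -/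
open scoped BigOperators

noncomputable section

/-! The torsion connection of `(𝔫, T)` is `∇_X = -X₅ E₁ - X₄ E₂ + X₁ E₃` (coordinates numbered
from 1), where `E₁, E₂, E₃` are skew endomorphisms with the commutation relations of `𝔰𝔬(3)`.
Its curvature `R(X,Y) = ⁅∇_X, ∇_Y⁆ - ∇_{[X,Y]}` is therefore an `𝔰𝔬(3)`-valued 2-form, computed
by the Lie algebra relations alone, and the Ricci tensor is a trace of three explicit 2-forms
against `E₁, E₂, E₃`. -/

open Matrix

attribute [local instance] LieRing.ofAssociativeRing

lemma gIP_e_right (X : Fin 6 → ℝ) (i : Fin 6) : gIP X (e i) = X i := by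
  simp [gIP, e]

lemma gIP_e_self (i : Fin 6) : gIP (e i) (e i) = 1 := by
  simp [gIP_e_right, e]

lemma sum_two_e_mul (i j : Fin 6) (X v : Fin 6 → ℝ) :
    ∑ a, two i j (e a) X * v a = X j * v i - X i * v j := by
  simp only [two, e, sub_mul, Finset.sum_sub_distrib, ite_mul, one_mul, zero_mul,
    Finset.sum_ite_eq, Finset.mem_univ, if_true]

lemma Rmap_eq_mulVec {br : (Fin 6 → ℝ) → (Fin 6 → ℝ) → (Fin 6 → ℝ)}
    {T : (Fin 6 → ℝ) → (Fin 6 → ℝ) → (Fin 6 → ℝ) → ℝ} {M : (Fin 6 → ℝ) → Matrix (Fin 6) (Fin 6) ℝ}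
    (hM : ∀ X Y, nab br T X Y = M X *ᵥ Y) (X Y Z : Fin 6 → ℝ) :
    Rmap br T X Y Z = (⁅M X, M Y⁆ - M (br X Y)) *ᵥ Z := by
  simp only [Rmap, hM, mulVec_mulVec, sub_mulVec, Ring.lie_def]

lemma sum_R4_e_e (br : (Fin 6 → ℝ) → (Fin 6 → ℝ) → (Fin 6 → ℝ))
    (T : (Fin 6 → ℝ) → (Fin 6 → ℝ) → (Fin 6 → ℝ) → ℝ) (X Y : Fin 6 → ℝ) :
    ∑ a, R4 br T (e a) X Y (e a) = ∑ a, Rmap br T (e a) X Y a := by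
  simp only [R4, gIP_e_right]

namespace Nil

def E₁ : Matrix (Fin 6) (Fin 6) ℝ :=
  !![0, 0, 0, -1, 0, 0; 0, 0, 1, 0, 0, 0; 0, -1, 0, 0, 0, 0;
     1, 0, 0, 0, 0, 0; 0, 0, 0, 0, 0, 0; 0, 0, 0, 0, 0, 0]

def E₂ : Matrix (Fin 6) (Fin 6) ℝ :=
  !![0, 0, 0, 0, 1, 0; 0, 0, 0, 0, 0, 1; 0, 0, 0, 0, 0, 0;
     0, 0, 0, 0, 0, 0; -1, 0, 0, 0, 0, 0; 0, -1, 0, 0, 0, 0]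

def E₃ : Matrix (Fin 6) (Fin 6) ℝ :=
  !![0, 0, 0, 0, 0, 0; 0, 0, 0, 0, 0, 0; 0, 0, 0, 0, 0, -1;
     0, 0, 0, 0, 1, 0; 0, 0, 0, -1, 0, 0; 0, 0, 1, 0, 0, 0]

lemma lie_E₁_E₂ : ⁅E₁, E₂⁆ = E₃ := by
  ext i j; fin_cases i <;> fin_cases j <;> simp [E₁, E₂, E₃, Ring.lie_def]

lemma lie_E₂_E₃ : ⁅E₂, E₃⁆ = E₁ := by
  ext i j; fin_cases i <;> fin_cases j <;> simp [E₁, E₂, E₃, Ring.lie_def]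

lemma lie_E₃_E₁ : ⁅E₃, E₁⁆ = E₂ := by
  ext i j; fin_cases i <;> fin_cases j <;> simp [E₁, E₂, E₃, Ring.lie_def]

def conn (X : Fin 6 → ℝ) : Matrix (Fin 6) (Fin 6) ℝ :=
  -X 4 • E₁ - X 3 • E₂ + X 0 • E₃

lemma nab_eq_conn_mulVec (X Y : Fin 6 → ℝ) : nab brNil TNil X Y = conn X *ᵥ Y := by
  funext m
  fin_cases m <;>
    simp [nab, brNil, TNil, conn, E₁, E₂, E₃, gIP, e, two, three, mulVec, dotProduct,
      Fin.sum_univ_six] <;> ring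

lemma conn_brNil (X Y : Fin 6 → ℝ) :
    conn (brNil X Y) = two 1 2 X Y • E₁ + two 1 5 X Y • E₂ - two 2 5 X Y • E₃ := by
  simp only [conn, brNil, e, Fin.isValue, Fin.reduceEq, ↓reduceIte, Pi.add_apply, Pi.smul_apply,
    smul_eq_mul, mul_zero, mul_one, add_zero, zero_add]
  module

lemma curvature_eq (X Y : Fin 6 → ℝ) :
    ⁅conn X, conn Y⁆ - conn (brNil X Y) =
      (two 0 3 X Y - two 1 2 X Y) • E₁ - (two 0 4 X Y + two 1 5 X Y) • E₂
        + (two 2 5 X Y - two 3 4 X Y) • E₃ := by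
  have h₂₁ : ⁅E₂, E₁⁆ = -E₃ := by rw [← lie_skew E₂ E₁, lie_E₁_E₂]
  have h₃₂ : ⁅E₃, E₂⁆ = -E₁ := by rw [← lie_skew E₃ E₂, lie_E₂_E₃]
  have h₁₃ : ⁅E₁, E₃⁆ = -E₂ := by rw [← lie_skew E₁ E₃, lie_E₃_E₁]
  rw [conn_brNil]
  simp only [conn, two, add_lie, sub_lie, lie_add, lie_sub, smul_lie, lie_smul, lie_self,
    lie_E₁_E₂, lie_E₂_E₃, lie_E₃_E₁, h₂₁, h₃₂, h₁₃]
  module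

theorem ricci_eq (X Y : Fin 6 → ℝ) :
    ∑ a, R4 brNil TNil (e a) X Y (e a) = -2 * gIP X Y := by
  simp only [sum_R4_e_e, Rmap_eq_mulVec nab_eq_conn_mulVec, curvature_eq, add_mulVec, sub_mulVec,
    smul_mulVec, Pi.add_apply, Pi.sub_apply, Pi.smul_apply, smul_eq_mul, add_mul, sub_mul,
    Finset.sum_add_distrib, Finset.sum_sub_distrib, sum_two_e_mul]
  simp only [E₁, E₂, E₃, gIP, mulVec, dotProduct, Fin.sum_univ_six, Fin.isValue, of_apply,
    cons_val', cons_val_fin_one, cons_val_zero, cons_val_one, cons_val]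
  ring

end Nil

/-- on 𝔫, the torsion connection is Einstein: Ric = −2g, with scalar
curvature −12. -/
theorem stmt18 :
    (∀ X Y : Fin 6 → ℝ, (∑ a, R4 brNil TNil (e a) X Y (e a)) = -2 * gIP X Y) ∧
    (∑ i, ∑ a, R4 brNil TNil (e a) (e i) (e i) (e a)) = -12 := by
  refine ⟨Nil.ricci_eq, ?_⟩
  simp only [Nil.ricci_eq, gIP_e_self, Finset.sum_const, Finset.card_univ, Fintype.card_fin]
  norm_num
end
end
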